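/- For every natural number n ≥ 1 and every real z with 0 < z ≤ 1, the n-fold convolution f^{*n} restricted to (0, z] integrates to the normalized volume of the Euclidean ball of radius √z: ∫₀^z f^{*n}(λ) dλ = (1/2^n)·vol_n{x ∈ ℝⁿ : x₁² + ⋯ + x_n² ≤ z}, where vol_n is the n-dimensional Lebesgue measure. -/

import Mathlib

open MeasureTheory Real

/-- The density of `X²` for `X` uniform on `[-1,1]`:
`f z = (1/2) z^(-1/2)` for `0 < z < 1`, and `0` otherwise. -/
noncomputable def f (z : ℝ) : ℝ :=
  if 0 < z ∧ z < 1 then (1 / 2) * z ^ (-(1 / 2) : ℝ) else 0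

/-- Convolution of real functions: `(g ⋆ h)(z) = ∫ g λ · h (z − λ) dλ`. -/
noncomputable def conv (g h : ℝ → ℝ) (z : ℝ) : ℝ :=
  ∫ l, g l * h (z - l)

/-- `nconv n` is the `n`-fold convolution `f^{*n}` (for `n ≥ 1`):
`f^{*1} = f` and `f^{*(n+1)} = f^{*n} ⋆ f`. -/
noncomputable def nconv : ℕ → ℝ → ℝ
  | 0 => fun _ => 0
  | 1 => f
  | (n + 2) => conv (nconv (n + 1)) f

lemma beta_real {a b : ℝ} (ha : 0 < a) (hb : 0 < b) :
    ∫ x in (0:ℝ)..1, x ^ (a - 1) * (1 - x) ^ (b - 1) =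
      Real.Gamma a * Real.Gamma b / Real.Gamma (a + b) := by
  have hab : Real.Gamma (a + b) ≠ 0 := (Real.Gamma_pos_of_pos (by linarith)).ne'
  have key := Complex.Gamma_mul_Gamma_eq_betaIntegral (s := (a:ℂ)) (t := (b:ℂ))
    (by simpa using ha) (by simpa using hb)
  have hbeta : Complex.betaIntegral a b =
      ((∫ x in (0:ℝ)..1, x ^ (a - 1) * (1 - x) ^ (b - 1) : ℝ) : ℂ) := by
    rw [← intervalIntegral.integral_ofReal, Complex.betaIntegral]
    refine intervalIntegral.integral_congr fun x hx => ?_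
    rw [Set.uIcc_of_le (by norm_num : (0:ℝ) ≤ 1)] at hx
    rw [Complex.ofReal_mul, Complex.ofReal_cpow hx.1,
      Complex.ofReal_cpow (by linarith [hx.2])]
    push_cast
    ring
  rw [hbeta] at key
  rw [show ((a:ℂ) + b) = ((a + b : ℝ) : ℂ) by push_cast; ring] at key
  rw [Complex.Gamma_ofReal, Complex.Gamma_ofReal, Complex.Gamma_ofReal] at key
  rw [← Complex.ofReal_mul, ← Complex.ofReal_mul, Complex.ofReal_inj] at key
  rw [key]
  field_simp

lemma nconv_nonpos : ∀ (n : ℕ) (l : ℝ), l ≤ 0 → nconv n l = 0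
  | 0, l, _ => rfl
  | 1, l, hl => by
    show f l = 0
    rw [f, if_neg]
    rintro ⟨h, _⟩; linarith
  | (n + 2), l, hl => by
    show conv (nconv (n + 1)) f l = 0
    rw [conv]
    have : ∀ t : ℝ, nconv (n + 1) t * f (l - t) = 0 := by
      intro t
      rcases le_or_gt t 0 with h | h
      · rw [nconv_nonpos (n + 1) t h, zero_mul]
      · rw [show f (l - t) = 0 by rw [f, if_neg]; rintro ⟨h', _⟩; linarith, mul_zero]
    simp only [this, integral_zero]

/-- the constant in the density formula -/
noncomputable def cc (n : ℕ) : ℝ := Real.sqrt π ^ n / (2 ^ n * Real.Gamma ((n : ℝ) / 2))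

lemma nconv_eq (n : ℕ) (hn : 1 ≤ n) : ∀ l : ℝ, 0 < l → l < 1 →
    nconv n l = cc n * l ^ ((n : ℝ) / 2 - 1) := by
  induction n, hn using Nat.le_induction with
  | base =>
    intro l hl0 hl1
    show f l = _
    rw [f, if_pos ⟨hl0, hl1⟩, cc]
    have h1 : ((1 : ℕ) : ℝ) / 2 = 1 / 2 := by norm_num
    rw [h1, Real.Gamma_one_half_eq, show (1:ℝ)/2 - 1 = -(1/2) by norm_num]
    have hπ : Real.sqrt π ≠ 0 := by positivity
    field_simp
  | succ n hn IH =>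
    intro l hl0 hl1
    obtain ⟨m, rfl⟩ : ∃ m, n = m + 1 := ⟨n - 1, (Nat.succ_pred_eq_of_pos hn).symm⟩
    have hmcast : ((m + 1 + 1 : ℕ) : ℝ) = (m : ℝ) + 2 := by push_cast; ring
    have hm1cast : ((m + 1 : ℕ) : ℝ) = (m : ℝ) + 1 := by push_cast; ring
    set α : ℝ := ((m : ℝ) + 1) / 2 - 1 with hα
    set β : ℝ := -(1/2 : ℝ) with hβ
    have key : ∀ t : ℝ, nconv (m + 1) t * f (l - t) =
        Set.indicator (Set.Ioo 0 l)
          (fun t => (cc (m + 1) * (1/2)) * (t ^ α * (l - t) ^ β)) t := by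
      intro t
      rcases le_or_gt t 0 with h | h
      · rw [nconv_nonpos (m + 1) t h, zero_mul,
          Set.indicator_of_notMem (by simp [Set.mem_Ioo]; intro h'; linarith)]
      rcases le_or_gt l t with h2 | h2
      · rw [show f (l - t) = 0 by rw [f, if_neg]; rintro ⟨h', _⟩; linarith, mul_zero,
          Set.indicator_of_notMem (by simp [Set.mem_Ioo]; intro h'; linarith)]
      · rw [Set.indicator_of_mem (Set.mem_Ioo.mpr ⟨h, h2⟩)]
        rw [IH t h (lt_of_lt_of_le h2 hl1.le), f, if_pos ⟨by linarith, by linarith⟩,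
          hm1cast]
        ring
    show conv (nconv (m + 1)) f l = _
    rw [conv]
    rw [show (fun t => nconv (m + 1) t * f (l - t)) = Set.indicator (Set.Ioo 0 l)
          (fun t => (cc (m + 1) * (1/2)) * (t ^ α * (l - t) ^ β)) from funext key]
    rw [integral_indicator measurableSet_Ioo, ← integral_Ioc_eq_integral_Ioo,
      ← intervalIntegral.integral_of_le hl0.le, intervalIntegral.integral_const_mul]
    have hsub : (∫ t in (0:ℝ)..l, t ^ α * (l - t) ^ β) =
        l ^ (α + β + 1) * ∫ s in (0:ℝ)..1, s ^ α * (1 - s) ^ β := by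
      have hs := intervalIntegral.smul_integral_comp_mul_left
        (fun t => t ^ α * (l - t) ^ β) (a := 0) (b := 1) l
      rw [mul_zero, mul_one] at hs
      rw [← hs, smul_eq_mul]
      have : ∀ s ∈ Set.uIcc (0:ℝ) 1,
          (l * s) ^ α * (l - l * s) ^ β = (l ^ α * l ^ β) * (s ^ α * (1 - s) ^ β) := by
        intro s hs'
        rw [Set.uIcc_of_le (by norm_num : (0:ℝ) ≤ 1)] at hs'
        rw [Real.mul_rpow hl0.le hs'.1, show l - l * s = l * (1 - s) by ring,
          Real.mul_rpow hl0.le (by linarith [hs'.2])]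
        ring
      rw [intervalIntegral.integral_congr this, intervalIntegral.integral_const_mul]
      rw [Real.rpow_add hl0, Real.rpow_add hl0, Real.rpow_one]
      ring
    rw [hsub]
    rw [show (∫ s in (0:ℝ)..1, s ^ α * (1 - s) ^ β)
        = ∫ s in (0:ℝ)..1, s ^ (((m:ℝ)+1)/2 - 1) * (1 - s) ^ ((1:ℝ)/2 - 1) by
      congr 1; ext s; rw [hα, hβ]; norm_num]
    rw [beta_real (by positivity) (by norm_num)]
    rw [Real.Gamma_one_half_eq]
    have hΓpos : 0 < Real.Gamma (((m:ℝ)+1)/2) := Real.Gamma_pos_of_pos (by positivity)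
    have hexp : α + β + 1 = ((m + 1 + 1 : ℕ) : ℝ) / 2 - 1 := by
      rw [hα, hβ, hmcast]; ring
    rw [hexp, cc, cc, hmcast, hm1cast,
      show ((m:ℝ)+1)/2 + 1/2 = ((m:ℝ)+2)/2 by ring]
    have hΓ2pos : 0 < Real.Gamma (((m:ℝ)+2)/2) := Real.Gamma_pos_of_pos (by positivity)
    have hπ : (0:ℝ) < Real.sqrt π := Real.sqrt_pos.mpr pi_pos
    field_simp
    ring

/-- For `n ≥ 1` and `0 < z ≤ 1`,
`∫₀^z f^{*n}(λ) dλ = (1/2^n)·vol_n {x ∈ ℝⁿ : x₁² + ⋯ + x_n² ≤ z}`,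
i.e. `2^{-n}` times the volume of the Euclidean ball of radius `√z`. -/
theorem integral_nconv_eq_ball_volume (n : ℕ) (hn : 1 ≤ n)
    (z : ℝ) (hz0 : 0 < z) (hz1 : z ≤ 1) :
    (∫ l in (0 : ℝ)..z, nconv n l) =
      (1 / 2 ^ n) *
        (volume (Metric.closedBall (0 : EuclideanSpace ℝ (Fin n))
          (Real.sqrt z))).toReal := by
  haveI : Nonempty (Fin n) := ⟨⟨0, hn⟩⟩
  rw [EuclideanSpace.volume_closedBall]
  rw [intervalIntegral.integral_of_le hz0.le, integral_Ioc_eq_integral_Ioo]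
  rw [setIntegral_congr_fun measurableSet_Ioo
    (fun l hl => nconv_eq n hn l hl.1 (lt_of_lt_of_le hl.2 hz1))]
  rw [← integral_Ioc_eq_integral_Ioo, ← intervalIntegral.integral_of_le hz0.le,
    intervalIntegral.integral_const_mul,
    integral_rpow (Or.inl (by
      have : (0:ℝ) < (n:ℝ) := by exact_mod_cast hn
      linarith [div_pos this two_pos]))]
  have hn' : (0:ℝ) < (n:ℝ) := by exact_mod_cast hn
  rw [show (n:ℝ)/2 - 1 + 1 = (n:ℝ)/2 by ring, Real.zero_rpow (by positivity)]
  simp only [Fintype.card_fin]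
  rw [ENNReal.toReal_mul, ENNReal.toReal_pow, ENNReal.toReal_ofReal (Real.sqrt_nonneg z),
    ENNReal.toReal_ofReal (by positivity)]
  have hsq : Real.sqrt z ^ n = z ^ ((n:ℝ)/2) := by
    rw [← Real.rpow_natCast (Real.sqrt z) n, Real.rpow_def_of_pos (Real.sqrt_pos.mpr hz0),
      Real.log_sqrt hz0.le, Real.rpow_def_of_pos hz0]
    congr 1
    ring
  have hΓ : Real.Gamma ((n:ℝ)/2 + 1) = ((n:ℝ)/2) * Real.Gamma ((n:ℝ)/2) :=
    Real.Gamma_add_one (by positivity)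
  have hΓpos : 0 < Real.Gamma ((n:ℝ)/2) := Real.Gamma_pos_of_pos (by positivity)
  rw [hsq, cc, hΓ]
  field_simp
  ring
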